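/- arXiv:1208.4090 — 3 statements merged into one kernel-verified Lean document; each statement's English description precedes it below -/
import Mathlib

section
/- If f : ℕ → A is a one-sided infinite word over a finite alphabet and there exists n₀ ≥ 1 with P_f(n₀) ≤ n₀, then the restriction of f to {x : x > n₀} is periodic with period at most n₀. -/
/-!
Let `P n` count the length-`n` factors of `f`. Since `P 0 = 1` and `P n₀ ≤ n₀`, the
sequence `P` cannot increase strictly on `[0, n₀]`, so `P (n + 1) ≤ P n` for some
`n < n₀`. Then every length-`n` factor has a unique right extension, so the factor at a
position determines the whole tail from there. By pigeonhole two of the positions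
`0, …, n₀` carry the same length-`n` factor, and their distance is a period of the tail.
-/

open Set

namespace MorseHedlund

variable {A : Type*}

def factor (f : ℕ → A) (n m : ℕ) : Fin n → A := fun i => f (m + i)

/-- The factor complexity `P_f(n)`. -/
noncomputable def complexity (f : ℕ → A) (n : ℕ) : ℕ := (range (factor f n)).ncard

lemma factor_succ_comp_castSucc (f : ℕ → A) (n m : ℕ) :
    factor f (n + 1) m ∘ Fin.castSucc = factor f n m := rfl

lemma factor_succ_comp_succ (f : ℕ → A) (n m : ℕ) :
    factor f (n + 1) m ∘ Fin.succ = factor f n (m + 1) := by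
  funext i
  simp only [factor, Function.comp_apply, Fin.val_succ]
  congr 1
  omega

lemma image_range_factor_succ (f : ℕ → A) (n : ℕ) :
    (· ∘ Fin.castSucc) '' range (factor f (n + 1)) = range (factor f n) := by
  rw [← range_comp]
  rfl

lemma complexity_zero (f : ℕ → A) : complexity f 0 = 1 := by
  rw [complexity, ncard_eq_one]
  exact ⟨factor f 0 0, eq_singleton_iff_unique_mem.2
    ⟨mem_range_self 0, fun _ _ => Subsingleton.elim _ _⟩⟩

lemma exists_complexity_succ_le {f : ℕ → A} {n₀ : ℕ} (h : complexity f n₀ ≤ n₀) :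
    ∃ n < n₀, complexity f (n + 1) ≤ complexity f n := by
  by_contra! hlt
  have growth : ∀ n ≤ n₀, n + 1 ≤ complexity f n := by
    intro n
    induction n with
    | zero => simp [complexity_zero]
    | succ n ih => exact fun hn => (ih (by omega)).trans_lt (hlt n (by omega))
  exact absurd (growth n₀ le_rfl) (by omega)

variable [Finite A]

lemma complexity_mono (f : ℕ → A) : Monotone (complexity f) :=
  monotone_nat_of_le_succ fun n => by
    rw [complexity, ← image_range_factor_succ]
    exact ncard_image_le

lemma factor_succ_eq_of_factor_eq {f : ℕ → A} {n : ℕ}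
    (h : complexity f (n + 1) ≤ complexity f n) {m m' : ℕ}
    (hw : factor f n m = factor f n m') : factor f (n + 1) m = factor f (n + 1) m' := by
  have hinj : InjOn (· ∘ Fin.castSucc) (range (factor f (n + 1))) := by
    refine injOn_of_ncard_image_eq ?_
    rw [image_range_factor_succ]
    exact le_antisymm (complexity_mono f n.le_succ) h
  exact hinj (mem_range_self m) (mem_range_self m') <| by
    simpa only [factor_succ_comp_castSucc] using hw

lemma factor_add_eq_of_factor_eq {f : ℕ → A} {n : ℕ}
    (h : complexity f (n + 1) ≤ complexity f n) {m m' : ℕ}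
    (hw : factor f n m = factor f n m') (k : ℕ) :
    factor f (n + 1) (m + k) = factor f (n + 1) (m' + k) := by
  induction k with
  | zero => exact factor_succ_eq_of_factor_eq h hw
  | succ k ih =>
    refine factor_succ_eq_of_factor_eq h ?_
    rw [← add_assoc, ← add_assoc, ← factor_succ_comp_succ, ← factor_succ_comp_succ, ih]

lemma periodic_from_of_factor_eq {f : ℕ → A} {n : ℕ}
    (h : complexity f (n + 1) ≤ complexity f n) {m m' : ℕ} (hmm' : m ≤ m')
    (hw : factor f n m = factor f n m') {x : ℕ} (hx : m ≤ x) :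
    f (x + (m' - m)) = f x := by
  have := congrFun (factor_add_eq_of_factor_eq h hw (x - m)) 0
  simp only [factor, Fin.val_zero, add_zero] at this
  rw [Nat.add_sub_cancel' hx] at this
  rw [this]
  congr 1
  omega

lemma exists_lt_factor_eq {f : ℕ → A} {n n₀ : ℕ} (h : complexity f n ≤ n₀) :
    ∃ i j, i < j ∧ j ≤ n₀ ∧ factor f n i = factor f n j := by
  obtain ⟨i, hi, j, hj, hij, heq⟩ := exists_ne_map_eq_of_ncard_lt_of_maps_to
    (s := Iic n₀) (t := range (factor f n)) (by rw [ncard_Iic_nat]; exact Nat.lt_succ_of_le h)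
    (fun a _ => mem_range_self a)
  rcases hij.lt_or_gt with hlt | hgt
  · exact ⟨i, j, hlt, hj, heq⟩
  · exact ⟨j, i, hgt, hi, heq.symm⟩

end MorseHedlund

open MorseHedlund in
theorem morse_hedlund_nat_general {A : Type*} [Finite A] (f : ℕ → A) (n₀ : ℕ)
    (hP : (Set.range fun m : ℕ => fun i : Fin n₀ => f (m + (i : ℕ))).ncard ≤ n₀) :
    ∃ p : ℕ, 1 ≤ p ∧ p ≤ n₀ ∧ ∀ x : ℕ, n₀ < x → f (x + p) = f x := by
  obtain ⟨n, hn, hstall⟩ := exists_complexity_succ_le (f := f) hP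
  obtain ⟨i, j, hij, hj, hw⟩ :=
    exists_lt_factor_eq ((complexity_mono f hn.le).trans hP)
  exact ⟨j - i, by omega, by omega, fun x hx =>
    periodic_from_of_factor_eq hstall hij.le hw (by omega)⟩

/-- **Morse–Hedlund theorem over `ℕ`.** If `P_f(n₀) ≤ n₀` for some `n₀ ≥ 1`,
then the restriction of `f` to `{x : x > n₀}` is periodic with period at most
`n₀`. -/
theorem morse_hedlund_nat {A : Type*} [Finite A] (f : ℕ → A) (n₀ : ℕ) (hn₀ : 1 ≤ n₀)
    (hP : (Set.range fun m : ℕ => fun i : Fin n₀ => f (m + (i : ℕ))).ncard ≤ n₀) :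
    ∃ p : ℕ, 1 ≤ p ∧ p ≤ n₀ ∧ ∀ x : ℕ, n₀ < x → f (x + p) = f x :=
  morse_hedlund_nat_general f n₀ hP
end

section
/- If S ⊂ ℤ² is a finite convex set with η-discrepancy d ≤ 0, then S contains a strictly decreasing nested chain S₁ ⊃ S₂ ⊃ … ⊃ S_{|d|+1} of weak η-generating subsets. -/
open Classical

namespace Nivat

noncomputable section

/-- Embedding of `ℤ × ℤ` into `ℝ × ℝ`. -/
def e (p : ℤ × ℤ) : ℝ × ℝ := ((p.1 : ℝ), (p.2 : ℝ))

/-- A finite set `S ⊆ ℤ²` is convex if `S = conv(S) ∩ ℤ²`. -/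
def IsConvexSet (S : Finset (ℤ × ℤ)) : Prop :=
  ∀ p : ℤ × ℤ, e p ∈ convexHull ℝ (e '' (S : Set (ℤ × ℤ))) → p ∈ S

variable {A : Type*}

/-- The `η`-coloring of `S` induced by the translate by `u`. -/
def pat (η : ℤ × ℤ → A) (S : Finset (ℤ × ℤ)) (u : ℤ × ℤ) : S → A :=
  fun x => η ((x : ℤ × ℤ) + u)

/-- `P_η(S)`: number of distinct `η`-colorings of `S`. -/
def Pc (η : ℤ × ℤ → A) (S : Finset (ℤ × ℤ)) : ℕ :=
  (Set.range (pat η S)).ncard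

/-- Discrepancy `D_η(S) = P_η(S) - |S|`. -/
def Dc (η : ℤ × ℤ → A) (S : Finset (ℤ × ℤ)) : ℤ :=
  (Pc η S : ℤ) - (S.card : ℤ)

/-- Restriction of a coloring of `S` to a subset `T`. -/
def res {S T : Finset (ℤ × ℤ)} (h : T ⊆ S) (f : S → A) : T → A :=
  fun x => f ⟨(x : ℤ × ℤ), h x.2⟩

/-- A coloring `α` of `T` extends uniquely to an `η`-coloring of `S`. -/
def ExtendsUniquely (η : ℤ × ℤ → A) {T S : Finset (ℤ × ℤ)} (h : T ⊆ S) (α : T → A) : Prop :=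
  ∃! β : S → A, β ∈ Set.range (pat η S) ∧ res h β = α

/-- A coloring `α` of `T` has at least two extensions to `η`-colorings of `S`. -/
def ExtendsNonUniquely (η : ℤ × ℤ → A) {T S : Finset (ℤ × ℤ)} (h : T ⊆ S) (α : T → A) : Prop :=
  ∃ β₁ β₂ : S → A, β₁ ∈ Set.range (pat η S) ∧ β₂ ∈ Set.range (pat η S) ∧
    β₁ ≠ β₂ ∧ res h β₁ = α ∧ res h β₂ = α

theorem eraseSub (S : Finset (ℤ × ℤ)) (x : ℤ × ℤ) : S.erase x ⊆ S :=
  fun _ hy => Finset.mem_of_mem_erase hy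

theorem sdiffSub (S T : Finset (ℤ × ℤ)) : S \ T ⊆ S :=
  fun _ hy => (Finset.mem_sdiff.mp hy).1

/-- `x ∈ S` is `η`-generated by `S`: every `η`-coloring of `S \ {x}`
extends uniquely to an `η`-coloring of `S`. -/
def Generated (η : ℤ × ℤ → A) (S : Finset (ℤ × ℤ)) (x : ℤ × ℤ) : Prop :=
  ∀ α ∈ Set.range (pat η (S.erase x)), ExtendsUniquely η (eraseSub S x) α

/-- `x` is an extreme point of the convex polygon `conv(S)`. -/
def IsExtremePt (S : Finset (ℤ × ℤ)) (x : ℤ × ℤ) : Prop :=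
  e x ∈ Set.extremePoints ℝ (convexHull ℝ (e '' (S : Set (ℤ × ℤ))))

/-- A weak `η`-generating set: finite, nonempty, convex, and every extreme
point is `η`-generated. -/
def WeakGenerating (η : ℤ × ℤ → A) (S : Finset (ℤ × ℤ)) : Prop :=
  S.Nonempty ∧ IsConvexSet S ∧ ∀ x ∈ S, IsExtremePt S x → Generated η S x

/-- An `η`-generating set: weak generating and every nonempty proper convex
subset has strictly larger discrepancy. -/
def Generating (η : ℤ × ℤ → A) (S : Finset (ℤ × ℤ)) : Prop :=
  WeakGenerating η S ∧
    ∀ T ⊆ S, T ≠ S → T.Nonempty → IsConvexSet T → Dc η S < Dc η T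

/-- The segment from `e p` to `e q` is a (1-dimensional exposed) boundary edge
of the convex polygon `conv(S)`. -/
def IsEdge (S : Finset (ℤ × ℤ)) (p q : ℤ × ℤ) : Prop :=
  p ≠ q ∧ p ∈ S ∧ q ∈ S ∧ ∃ ℓ : (ℝ × ℝ) →ₗ[ℝ] ℝ, ∃ c : ℝ,
    (∀ x ∈ convexHull ℝ (e '' (S : Set (ℤ × ℤ))), ℓ x ≤ c) ∧
    {x ∈ convexHull ℝ (e '' (S : Set (ℤ × ℤ))) | ℓ x = c} = segment ℝ (e p) (e q)

/-- An edge of `S`, oriented positively (the set lies to the left of `p → q`). -/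
def IsOrientedEdge (S : Finset (ℤ × ℤ)) (p q : ℤ × ℤ) : Prop :=
  IsEdge S p q ∧ ∀ x ∈ S, 0 ≤ (q.1 - p.1) * (x.2 - p.2) - (q.2 - p.2) * (x.1 - p.1)

/-- The lattice points of `S` lying on the edge from `p` to `q`. -/
def edgePts (S : Finset (ℤ × ℤ)) (p q : ℤ × ℤ) : Finset (ℤ × ℤ) :=
  S.filter (fun x => e x ∈ segment ℝ (e p) (e q))

/-- The rectangle `R_{n,k} = [0,n) × [0,k) ∩ ℤ²`. -/
def Rect (n k : ℕ) : Finset (ℤ × ℤ) :=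
  Finset.Ico (0 : ℤ) (n : ℤ) ×ˢ Finset.Ico (0 : ℤ) (k : ℤ)

/-- `η` is aperiodic: no nonzero period vector. -/
def Aperiodic (η : ℤ × ℤ → A) : Prop :=
  ∀ v : ℤ × ℤ, v ≠ 0 → ∃ x : ℤ × ℤ, η (x + v) ≠ η x

/-- Action of a `2 × 2` integer matrix on `ℤ²`. -/
def Mv (M : Matrix (Fin 2) (Fin 2) ℤ) (p : ℤ × ℤ) : ℤ × ℤ :=
  (M 0 0 * p.1 + M 0 1 * p.2, M 1 0 * p.1 + M 1 1 * p.2)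

/-- `u` and `v` are positively parallel (same direction). -/
def PosParallel (u v : ℤ × ℤ) : Prop :=
  ∃ t₁ t₂ : ℤ, 0 < t₁ ∧ 0 < t₂ ∧ t₁ • u = t₂ • v

/-- The directed rational line through the origin with direction `d` is
one-sided `η`-expansive: for some `a, b ∈ ℕ` and `A ∈ SL₂(ℤ)` taking the
downward `y`-axis to the direction `d`, every `(η ∘ A)`-coloring of
`[0,a] × [-b,b]` extends uniquely to `[0,a] × [-b,b] ∪ {(-1,0)}`. -/
def OneSidedExpansive (η : ℤ × ℤ → A) (d : ℤ × ℤ) : Prop :=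
  ∃ a b : ℕ, ∃ M : Matrix (Fin 2) (Fin 2) ℤ, M.det = 1 ∧
    PosParallel (Mv M (0, -1)) d ∧
    ∀ u v : ℤ × ℤ,
      (∀ x : ℤ × ℤ, 0 ≤ x.1 → x.1 ≤ (a : ℤ) → -(b : ℤ) ≤ x.2 → x.2 ≤ (b : ℤ) →
        η (Mv M (x + u)) = η (Mv M (x + v))) →
      η (Mv M ((-1, 0) + u)) = η (Mv M ((-1, 0) + v))

end

end Nivat

namespace Nivat

theorem e_injective : Function.Injective e := fun p q h => by
  simp only [e, Prod.mk.injEq, Int.cast_inj] at h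
  exact Prod.ext h.1 h.2

theorem IsConvexSet.erase {S : Finset (ℤ × ℤ)} {x : ℤ × ℤ} (hS : IsConvexSet S)
    (hx : IsExtremePt S x) : IsConvexSet (S.erase x) := by
  intro p hp
  have hsub : e '' ((S.erase x : Finset (ℤ × ℤ)) : Set (ℤ × ℤ)) ⊆
      convexHull ℝ (e '' (S : Set (ℤ × ℤ))) \ {e x} := by
    rw [Finset.coe_erase, Set.image_sdiff e_injective, Set.image_singleton]
    exact Set.sdiff_subset_sdiff_left (subset_convexHull ℝ _)
  have hxp : p ≠ x := by
    rintro rfl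
    exact ((convex_convexHull ℝ _).mem_extremePoints_iff_mem_sdiff_convexHull_sdiff.1 hx).2
      (convexHull_mono hsub hp)
  have hpS : p ∈ S :=
    hS p (convexHull_mono (Set.image_mono (Finset.coe_subset.2 (S.erase_subset x))) hp)
  exact Finset.mem_erase.2 ⟨hxp, hpS⟩

theorem exists_isExtremePt {S : Finset (ℤ × ℤ)} (hS : S.Nonempty) :
    ∃ x ∈ S, IsExtremePt S x := by
  obtain ⟨z, hz⟩ := hS
  obtain ⟨y, hy⟩ := ((S.finite_toSet.image e).isCompact_convexHull ℝ).extremePoints_nonempty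
    ⟨e z, subset_convexHull ℝ _ ⟨z, hz, rfl⟩⟩
  obtain ⟨x, hx, rfl⟩ := extremePoints_convexHull_subset hy
  exact ⟨x, hx, hy⟩

section Discrepancy

variable {A : Type*} (η : ℤ × ℤ → A)

theorem range_pat_eq_image_res {T S : Finset (ℤ × ℤ)} (h : T ⊆ S) :
    Set.range (pat η T) = res h '' Set.range (pat η S) := by
  rw [← Set.range_comp]
  rfl

theorem generated_iff_injOn {S : Finset (ℤ × ℤ)} {x : ℤ × ℤ} :
    Generated η S x ↔ Set.InjOn (res (eraseSub S x)) (Set.range (pat η S)) := by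
  constructor
  · rintro hg _ ⟨u, rfl⟩ β hβ hres
    exact (hg _ ⟨u, rfl⟩).unique ⟨⟨u, rfl⟩, rfl⟩ ⟨hβ, hres.symm⟩
  · rintro hinj _ ⟨u, rfl⟩
    exact ⟨pat η S u, ⟨⟨u, rfl⟩, rfl⟩, fun β ⟨hβ, hres⟩ => hinj hβ ⟨u, rfl⟩ hres⟩

variable [Finite A]

theorem one_le_Pc (S : Finset (ℤ × ℤ)) : 1 ≤ Pc η S :=
  (Set.ncard_pos (Set.toFinite _)).2 (Set.range_nonempty _)

theorem Pc_le_of_subset {T S : Finset (ℤ × ℤ)} (h : T ⊆ S) : Pc η T ≤ Pc η S := by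
  rw [Pc, Pc, range_pat_eq_image_res η h]
  exact Set.ncard_image_le (Set.toFinite _)

theorem Pc_erase_eq_iff {S : Finset (ℤ × ℤ)} {x : ℤ × ℤ} :
    Pc η (S.erase x) = Pc η S ↔ Generated η S x := by
  rw [Pc, Pc, range_pat_eq_image_res η (eraseSub S x), generated_iff_injOn]
  exact Set.ncard_image_iff (Set.toFinite _)

theorem nonempty_of_Dc_nonpos {S : Finset (ℤ × ℤ)} (hD : Dc η S ≤ 0) : S.Nonempty := by
  have := one_le_Pc η S
  rw [← Finset.card_pos]
  unfold Dc at hD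
  omega

theorem Dc_erase_of_generated {S : Finset (ℤ × ℤ)} {x : ℤ × ℤ} (hx : x ∈ S)
    (hg : Generated η S x) : Dc η (S.erase x) = Dc η S + 1 := by
  have hcard := Finset.card_erase_add_one hx
  rw [Dc, Dc, (Pc_erase_eq_iff η).2 hg]
  omega

theorem Dc_erase_le_of_not_generated {S : Finset (ℤ × ℤ)} {x : ℤ × ℤ} (hx : x ∈ S)
    (hg : ¬ Generated η S x) : Dc η (S.erase x) ≤ Dc η S := by
  have hcard := Finset.card_erase_add_one hx
  have hPc : Pc η (S.erase x) < Pc η S :=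
    (Pc_le_of_subset η (eraseSub S x)).lt_of_ne (mt (Pc_erase_eq_iff η).1 hg)
  rw [Dc, Dc]
  omega

end Discrepancy

section Chain

variable {A : Type*} [Finite A] {η : ℤ × ℤ → A}

/-- Removing a non-generated extreme point keeps the set convex and does not increase the
discrepancy, so repeating this ends at a weak generating set. -/
theorem exists_weakGenerating_subset {S : Finset (ℤ × ℤ)} (hconv : IsConvexSet S)
    (hD : Dc η S ≤ 0) : ∃ T ⊆ S, Dc η T ≤ Dc η S ∧ WeakGenerating η T := by
  induction S using Finset.strongInduction with
  | H S ih =>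
    by_cases hgen : ∀ x ∈ S, IsExtremePt S x → Generated η S x
    · exact ⟨S, subset_rfl, le_rfl, nonempty_of_Dc_nonpos η hD, hconv, hgen⟩
    push Not at hgen
    obtain ⟨x, hx, hext, hng⟩ := hgen
    have hD' : Dc η (S.erase x) ≤ Dc η S := Dc_erase_le_of_not_generated η hx hng
    obtain ⟨T, hTS, hTD, hT⟩ :=
      ih _ (Finset.erase_ssubset hx) (hconv.erase hext) (hD'.trans hD)
    exact ⟨T, hTS.trans (S.erase_subset x), hTD.trans hD', hT⟩

/-- Each step removes a generated extreme point of a weak generating set, which raises the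
discrepancy by exactly one. -/
theorem exists_weakGenerating_chain (k : ℕ) {S : Finset (ℤ × ℤ)} (hconv : IsConvexSet S)
    (hD : Dc η S ≤ -k) : ∃ c : Fin (k + 1) → Finset (ℤ × ℤ),
      (∀ i, c i ⊆ S) ∧ (∀ i, WeakGenerating η (c i)) ∧ StrictAnti c := by
  induction k generalizing S with
  | zero =>
    obtain ⟨T, hTS, -, hT⟩ := exists_weakGenerating_subset hconv (by simpa using hD)
    exact ⟨fun _ => T, fun _ => hTS, fun _ => hT, fun i j hij => absurd hij (by omega)⟩
  | succ k ih =>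
    obtain ⟨T, hTS, hTD, hT⟩ := exists_weakGenerating_subset hconv (hD.trans (by simp))
    obtain ⟨x, hx, hext⟩ := exists_isExtremePt hT.1
    have hDx : Dc η (T.erase x) ≤ -k := by
      rw [Dc_erase_of_generated η hx (hT.2.2 x hx hext)]
      push_cast at hD
      omega
    obtain ⟨c, hcS, hc, hanti⟩ := ih (hT.2.1.erase hext) hDx
    refine ⟨Matrix.vecCons T c, ?_, ?_, ?_⟩
    · refine Fin.cases hTS fun i => ?_
      simpa using (hcS i).trans ((T.erase_subset x).trans hTS)
    · exact Fin.cases hT fun i => by simpa using hc i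
    · exact strictAnti_vecCons.2 ⟨(hcS 0).trans_ssubset (Finset.erase_ssubset hx), hanti⟩

end Chain

/-- If `S ⊂ ℤ²` is a finite convex set with `η`-discrepancy `d ≤ 0`, then `S`
contains a strictly decreasing nested chain `S₁ ⊃ S₂ ⊃ … ⊃ S_{|d|+1}` of weak
`η`-generating subsets. -/
theorem statement5 {A : Type*} [Finite A] (η : ℤ × ℤ → A) (S : Finset (ℤ × ℤ))
    (hconv : IsConvexSet S) (hD : Dc η S ≤ 0) :
    ∃ c : Fin ((Dc η S).natAbs + 1) → Finset (ℤ × ℤ),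
      (∀ i, c i ⊆ S) ∧ (∀ i, WeakGenerating η (c i)) ∧
      ∀ i j, i < j → c j ⊂ c i := by
  obtain ⟨c, hcS, hc, hanti⟩ :=
    exists_weakGenerating_chain (Dc η S).natAbs hconv (η := η) (by omega)
  exact ⟨c, hcS, hc, fun _ _ hij => hanti hij⟩

end Nivat
end

section
/- Suppose η : ℤ² → A is aperiodic, P_η(R_{n,k}) ≤ nk/2 for some n,k, and S is a strong η-generating set. Then for every boundary edge w of S, the number of distinct η-colorings of S \ w that extend non-uniquely to η-colorings of S is at most ⌊|w ∩ S|/2⌋. -/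
open Classical

/-!
Restriction maps the `η`-colorings of `S` onto the `η`-colorings of `S \ w`, and the colorings
that extend non-uniquely are exactly the points with at least two preimages. Hence their number
plus `P_η(S \ w)` is at most `P_η(S)`, and `D_η(S \ w) ≥ D_η(S) + ⌈|w ∩ S|/2⌉` turns this into
the bound `|w ∩ S| - ⌈|w ∩ S|/2⌉ = ⌊|w ∩ S|/2⌋`.
-/

open Finset

theorem Finset.card_image_add_card_filter_one_lt_card_fiber_le {α β : Type*} [DecidableEq β]
    (f : α → β) (s : Finset α) :
    #(s.image f) + #{y ∈ s.image f | 1 < #{x ∈ s | f x = y}} ≤ #s := by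
  rw [card_eq_sum_card_image f s, card_eq_sum_ones, card_filter, ← sum_add_distrib]
  refine sum_le_sum fun y hy => ?_
  obtain ⟨x, hx, rfl⟩ := mem_image.1 hy
  have : 0 < #{x' ∈ s | f x' = f x} := card_pos.2 ⟨x, mem_filter.2 ⟨hx, rfl⟩⟩
  split_ifs <;> omega

theorem Set.ncard_image_add_ncard_multiple_le {α β : Type*} (f : α → β) {X : Set α}
    (hX : X.Finite) :
    (f '' X).ncard + {y | ∃ x₁ ∈ X, ∃ x₂ ∈ X, x₁ ≠ x₂ ∧ f x₁ = y ∧ f x₂ = y}.ncard ≤ X.ncard := by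
  classical
  have hmultiple : {y | ∃ x₁ ∈ X, ∃ x₂ ∈ X, x₁ ≠ x₂ ∧ f x₁ = y ∧ f x₂ = y} =
      ↑{y ∈ hX.toFinset.image f | 1 < #{x ∈ hX.toFinset | f x = y}} := by
    ext y
    simp only [Set.mem_ofPred_eq, coe_filter, Set.Finite.mem_toFinset, one_lt_card, mem_filter]
    constructor
    · rintro ⟨x₁, h₁, x₂, h₂, hne, rfl, hy⟩
      exact ⟨Finset.mem_image_of_mem f (hX.mem_toFinset.2 h₁), x₁, ⟨h₁, rfl⟩, x₂, ⟨h₂, hy⟩, hne⟩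
    · rintro ⟨-, x₁, ⟨h₁, hy₁⟩, x₂, ⟨h₂, hy₂⟩, hne⟩
      exact ⟨x₁, h₁, x₂, h₂, hne, hy₁, hy₂⟩
  have himage : (f '' X).ncard = #(hX.toFinset.image f) := by
    rw [← Set.ncard_coe_finset, coe_image, hX.coe_toFinset]
  rw [hmultiple, Set.ncard_coe_finset, himage, Set.ncard_eq_toFinset_card X hX]
  exact Finset.card_image_add_card_filter_one_lt_card_fiber_le f _

namespace Nivat

theorem ncard_extendsNonUniquely_add_Pc_le {A : Type*} [Finite A] (η : ℤ × ℤ → A)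
    {T S : Finset (ℤ × ℤ)} (h : T ⊆ S) :
    {α : T → A | ExtendsNonUniquely η h α}.ncard + Pc η T ≤ Pc η S := by
  have himage : res h '' Set.range (pat η S) = Set.range (pat η T) := by
    rw [← Set.range_comp]
    rfl
  have hNU : {α : T → A | ExtendsNonUniquely η h α} =
      {α | ∃ β₁ ∈ Set.range (pat η S), ∃ β₂ ∈ Set.range (pat η S),
        β₁ ≠ β₂ ∧ res h β₁ = α ∧ res h β₂ = α} := by
    ext α
    simp only [ExtendsNonUniquely, Set.mem_ofPred_eq, exists_and_left]
  have hfibers :=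
    Set.ncard_image_add_ncard_multiple_le (res h) (Set.toFinite (Set.range (pat η S)))
  rw [himage, ← hNU] at hfibers
  unfold Pc
  omega

theorem statement15_general {A : Type*} [Finite A] (η : ℤ × ℤ → A)
    (S : Finset (ℤ × ℤ))
    (hstrong2 : ∀ p q : ℤ × ℤ, IsEdge S p q →
      Dc η S + ((((edgePts S p q).card + 1) / 2 : ℕ) : ℤ) ≤ Dc η (S \ edgePts S p q))
    (p q : ℤ × ℤ) (hedge : IsEdge S p q) :
    Set.ncard {α : (S \ edgePts S p q : Finset (ℤ × ℤ)) → A |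
        ExtendsNonUniquely η (sdiffSub S (edgePts S p q)) α}
      ≤ (edgePts S p q).card / 2 := by
  have hcount := ncard_extendsNonUniquely_add_Pc_le η (sdiffSub S (edgePts S p q))
  have hdisc := hstrong2 p q hedge
  have hwS : edgePts S p q ⊆ S := filter_subset _ _
  have hcard := card_sdiff_of_subset hwS
  have hle := card_le_card hwS
  unfold Dc at hdisc
  omega

/-- If `η` is aperiodic with `P_η(R_{n,k}) ≤ nk/2` and `S` is a strong
`η`-generating set, then for every boundary edge `w` of `S`, at most
`⌊|w ∩ S|/2⌋` distinct `η`-colorings of `S \ w` extend non-uniquely to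
`η`-colorings of `S`. -/
theorem statement15 {A : Type*} [Finite A] (η : ℤ × ℤ → A) (hap : Aperiodic η)
    (n k : ℕ) (hn : 1 ≤ n) (hk : 1 ≤ k)
    (hP : 2 * Pc η (Rect n k) ≤ n * k)
    (S : Finset (ℤ × ℤ)) (hsub : S ⊆ Rect n k) (hgen : Generating η S)
    (hstrong1 : 2 * Dc η S ≤ -(S.card : ℤ))
    (hstrong2 : ∀ p q : ℤ × ℤ, IsEdge S p q →
      Dc η S + ((((edgePts S p q).card + 1) / 2 : ℕ) : ℤ) ≤ Dc η (S \ edgePts S p q))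
    (p q : ℤ × ℤ) (hedge : IsEdge S p q) :
    Set.ncard {α : (S \ edgePts S p q : Finset (ℤ × ℤ)) → A |
        ExtendsNonUniquely η (sdiffSub S (edgePts S p q)) α}
      ≤ (edgePts S p q).card / 2 :=
  statement15_general η S hstrong2 p q hedge

end Nivat
end
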